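/- In a Heyting algebra, for any filter P and elements a, b: the relative pseudo-complement a ⇨ b belongs to P if and only if for every prime filter P' containing P, a ∈ P' implies b ∈ P'. -/
import Mathlib


def IsFilter0 {H : Type*} [HeytingAlgebra H] (F : Set H) : Prop :=
  (⊤ : H) ∈ F ∧ ∀ m m' : H, m ∈ F → (m ⇨ m') ∈ F → m' ∈ F

def IsPrimeFilter0 {H : Type*} [HeytingAlgebra H] (F : Set H) : Prop :=
  IsFilter0 F ∧ (⊥ : H) ∉ F ∧ ∀ m m' : H, m ⊔ m' ∈ F → m ∈ F ∨ m' ∈ F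

lemma IsFilter0.up {H : Type*} [HeytingAlgebra H] {F : Set H} (hF : IsFilter0 F)
    {m m' : H} (hm : m ∈ F) (h : m ≤ m') : m' ∈ F := by
  refine hF.2 m m' hm ?_
  have : m ⇨ m' = ⊤ := by rwa [himp_eq_top_iff]
  rw [this]; exact hF.1

lemma IsFilter0.inf {H : Type*} [HeytingAlgebra H] {F : Set H} (hF : IsFilter0 F)
    {m m' : H} (hm : m ∈ F) (hm' : m' ∈ F) : m ⊓ m' ∈ F := by
  have h1 : (m' ⇨ (m ⇨ m ⊓ m')) ∈ F := by
    refine hF.up hF.1 ?_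
    rw [le_himp_iff, le_himp_iff]
    simp [inf_comm]
  exact hF.2 m (m ⊓ m') hm (hF.2 m' (m ⇨ m ⊓ m') hm' h1)

/-- Filter generated by a filter `F` together with an element `c`. -/
def genF {H : Type*} [HeytingAlgebra H] (F : Set H) (c : H) : Set H :=
  {x | ∃ f ∈ F, f ⊓ c ≤ x}

lemma genF_isFilter {H : Type*} [HeytingAlgebra H] {F : Set H} (hF : IsFilter0 F)
    (c : H) : IsFilter0 (genF F c) := by
  constructor
  · exact ⟨⊤, hF.1, le_top⟩
  · rintro m m' ⟨f, hf, hfm⟩ ⟨g, hg, hgm⟩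
    refine ⟨f ⊓ g, hF.inf hf hg, ?_⟩
    have h1 : f ⊓ g ⊓ c ≤ m := le_trans (by exact inf_le_inf_right c inf_le_left) hfm
    have h2 : f ⊓ g ⊓ c ≤ m ⇨ m' := le_trans (by exact inf_le_inf_right c inf_le_right) hgm
    calc f ⊓ g ⊓ c ≤ m ⊓ (m ⇨ m') := le_inf h1 h2
      _ ≤ m' := by rw [inf_comm]; exact himp_inf_le

lemma subset_genF {H : Type*} [HeytingAlgebra H] {F : Set H} (_hF : IsFilter0 F)
    (c : H) : F ⊆ genF F c := fun x hx => ⟨x, hx, inf_le_left⟩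

lemma mem_genF_self {H : Type*} [HeytingAlgebra H] {F : Set H} (hF : IsFilter0 F)
    (c : H) : c ∈ genF F c := ⟨⊤, hF.1, inf_le_right⟩

theorem himp_mem_iff_all_primes {H : Type*} [HeytingAlgebra H]
    (P : Set H) (hP : IsFilter0 P) (a b : H) :
    (a ⇨ b) ∈ P ↔
      ∀ P' : Set H, IsPrimeFilter0 P' → P ⊆ P' → a ∈ P' → b ∈ P' := by
  constructor
  · intro h P' hP' hsub ha
    exact hP'.1.2 a b ha (hsub h)
  · intro h
    by_contra hnot
    -- F₁ : filter generated by P and a; b ∉ F₁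
    set F₁ := genF P a with hF₁def
    have hF₁ : IsFilter0 F₁ := genF_isFilter hP a
    have hbF₁ : b ∉ F₁ := by
      rintro ⟨f, hf, hfb⟩
      exact hnot (hP.up hf (by rwa [le_himp_iff]))
    -- Zorn's lemma: maximal filter containing F₁ and avoiding b
    set S : Set (Set H) := {G | IsFilter0 G ∧ F₁ ⊆ G ∧ b ∉ G} with hSdef
    have hzorn : ∃ M, F₁ ⊆ M ∧ Maximal (· ∈ S) M := by
      refine zorn_subset_nonempty S ?_ F₁ ⟨hF₁, subset_rfl, hbF₁⟩
      intro c hcS hchain ⟨G₀, hG₀⟩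
      refine ⟨⋃₀ c, ⟨⟨?_, ?_⟩, ?_, ?_⟩, fun s hs => Set.subset_sUnion_of_mem hs⟩
      · exact ⟨G₀, hG₀, (hcS hG₀).1.1⟩
      · rintro m m' ⟨G₁, hG₁, hm⟩ ⟨G₂, hG₂, hm'⟩
        rcases hchain.total hG₁ hG₂ with h12 | h21
        · exact ⟨G₂, hG₂, (hcS hG₂).1.2 m m' (h12 hm) hm'⟩
        · exact ⟨G₁, hG₁, (hcS hG₁).1.2 m m' hm (h21 hm')⟩
      · exact (hcS hG₀).2.1.trans (Set.subset_sUnion_of_mem hG₀)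
      · rintro ⟨G₁, hG₁, hb⟩
        exact (hcS hG₁).2.2 hb
    obtain ⟨M, hF₁M, hMS, hMmax⟩ := hzorn
    obtain ⟨hMfil, hF₁M', hbM⟩ := hMS
    -- M is prime
    have hprime : IsPrimeFilter0 M := by
      refine ⟨hMfil, fun hbot => hbM (hMfil.up hbot bot_le), ?_⟩
      intro m m' hmm
      by_contra hcon
      push_neg at hcon
      obtain ⟨hm, hm'⟩ := hcon
      -- b ∈ genF M m and b ∈ genF M m'
      have key : ∀ x : H, x ∉ M → b ∈ genF M x := by
        intro x hx
        by_contra hb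
        have hGS : genF M x ∈ S :=
          ⟨genF_isFilter hMfil x, hF₁M'.trans (subset_genF hMfil x), hb⟩
        have := hMmax hGS (subset_genF hMfil x)
        exact hx (this (mem_genF_self hMfil x))
      obtain ⟨f, hf, hfb⟩ := key m hm
      obtain ⟨g, hg, hgb⟩ := key m' hm'
      have h1 : f ⊓ g ⊓ m ≤ b := le_trans (inf_le_inf_right m inf_le_left) hfb
      have h2 : f ⊓ g ⊓ m' ≤ b := le_trans (inf_le_inf_right m' inf_le_right) hgb
      have h3 : f ⊓ g ⊓ (m ⊔ m') ≤ b := by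
        rw [inf_sup_left]
        exact sup_le h1 h2
      exact hbM (hMfil.up (hMfil.inf (hMfil.inf hf hg) hmm) h3)
    have haM : a ∈ M := hF₁M' (mem_genF_self hP a)
    have hPM : P ⊆ M := (subset_genF hP a).trans hF₁M'
    exact hbM (h M hprime hPM haM)
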